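/- Let k ≥ 2 be a fixed integer. With probability tending to 1 as n → ∞, one can add at most (1/4 + o(1))·n²/(k-1) edges to the binomial random graph G(n,1/2) so that the vertex set of the resulting graph is covered by k-1 cliques; in particular, the resulting graph contains no induced copy of the cycle C_{2k}. -/

import Mathlib

open MeasureTheory Filter

/-- The Bernoulli measure with parameter `p` on `Bool`. -/
noncomputable def bernoulliMeasure (p : ℝ) : Measure Bool :=
  (ENNReal.ofReal p) • Measure.dirac true + (ENNReal.ofReal (1 - p)) • Measure.dirac false

instance bernoulliMeasure_finite (p : ℝ) : IsFiniteMeasure (bernoulliMeasure p) := by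
  constructor
  simp only [bernoulliMeasure, Measure.add_apply, Measure.smul_apply, smul_eq_mul,
    measure_univ, mul_one]
  exact ENNReal.add_lt_top.mpr ⟨ENNReal.ofReal_lt_top, ENNReal.ofReal_lt_top⟩

/-- The distribution of the binomial random graph `G(n,p)`, as a measure on
edge-indicator functions. -/
noncomputable def gnp (n : ℕ) (p : ℝ) : Measure (Sym2 (Fin n) → Bool) :=
  Measure.pi fun _ => bernoulliMeasure p

/-- The graph on `Fin n` determined by an edge-indicator function. -/
def graphOfFn {n : ℕ} (ω : Sym2 (Fin n) → Bool) : SimpleGraph (Fin n) where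
  Adj v w := v ≠ w ∧ ω s(v, w) = true
  symm := ⟨fun v w ⟨h1, h2⟩ => ⟨h1.symm, by rwa [Sym2.eq_swap]⟩⟩
  loopless := ⟨fun v ⟨h1, _⟩ => h1 rfl⟩

/-!
Split the vertices into `k - 1` blocks of size at most `n / (k - 1) + 1` and add every missing
edge inside a block, so that the blocks become cliques. There are at most
`n² / (2(k - 1)) + n / 2` pairs inside blocks, each missing independently with probability `1/2`,
so by Chebyshev's inequality at most `n² / (4(k - 1)) + o(n²)` edges are added with high
probability. An induced `C_{2k}` is impossible: `C_{2k}` is bipartite, so each clique contains at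
most two of its vertices, and `k - 1` cliques cannot cover all `2k` of them.
-/

open Finset Topology

namespace SimpleGraph

theorem card_le_mul_of_iUnion_isClique {V W ι : Type*} [Fintype V] [Fintype ι]
    {H : SimpleGraph V} {G : SimpleGraph W} {c : ℕ} (hH : H.Colorable c) (φ : H ↪g G)
    {t : ι → Set W} (ht : ∀ i, G.IsClique (t i)) (hcover : ⋃ i, t i = Set.univ) :
    Fintype.card V ≤ c * Fintype.card ι := by
  classical
  have hmem : ∀ v, ∃ i, φ v ∈ t i := fun v => Set.mem_iUnion.1 (hcover ▸ Set.mem_univ (φ v))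
  choose idx hidx using hmem
  have hfiber : ∀ i, #{v | idx v = i} ≤ c := fun i => by
    refine IsClique.card_le_of_colorable (fun v hv w hw hvw => ?_) hH
    simp only [coe_filter_univ, Set.mem_ofPred] at hv hw
    exact φ.map_adj_iff.1 <| ht i (hv ▸ hidx v) (hw ▸ hidx w) (φ.injective.ne hvw)
  calc Fintype.card V = ∑ i, #{v | idx v = i} := card_eq_sum_card_fiberwise fun _ _ => mem_univ _
    _ ≤ ∑ _i : ι, c := sum_le_sum fun i _ => hfiber i
    _ = c * Fintype.card ι := by rw [sum_const, card_univ, smul_eq_mul, mul_comm]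

theorem not_exists_iso_induce_cycleGraph_of_iUnion_isClique {V : Type*} {G : SimpleGraph V}
    {m k : ℕ} (hmk : m < k) {t : Fin m → Set V} (ht : ∀ i, G.IsClique (t i))
    (hcover : ⋃ i, t i = Set.univ) :
    ¬ ∃ S : Set V, Nonempty (cycleGraph (2 * k) ≃g G.induce S) := by
  rintro ⟨S, ⟨φ⟩⟩
  have := card_le_mul_of_iUnion_isClique
    (cycleGraph.bicoloring_of_even _ (even_two_mul _)).colorable
    (φ.toEmbedding.trans (Embedding.induce S)) ht hcover
  simp only [Fintype.card_fin, Fintype.card_bool] at this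
  omega

section fiberGraph

variable {V ι : Type*} (f : V → ι)

def fiberGraph : SimpleGraph V where
  Adj v w := v ≠ w ∧ f v = f w
  symm := ⟨fun _ _ h => ⟨h.1.symm, h.2.symm⟩⟩
  loopless := ⟨fun _ h => h.1 rfl⟩

instance [DecidableEq V] [DecidableEq ι] : DecidableRel (fiberGraph f).Adj :=
  fun _ _ => instDecidableAnd

theorem fiberGraph_isClique_preimage (i : ι) : (fiberGraph f).IsClique (f ⁻¹' {i}) :=
  fun _ hv _ hw hvw => ⟨hvw, hv.trans hw.symm⟩

theorem two_mul_card_edgeFinset_fiberGraph_le [Fintype V] [DecidableEq V] [DecidableEq ι] {q : ℕ}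
    (hf : ∀ i, #{v | f v = i} ≤ q) : 2 * #(fiberGraph f).edgeFinset ≤ Fintype.card V * q := by
  rw [← sum_degrees_eq_twice_card_edges, ← smul_eq_mul, ← card_univ, ← sum_const]
  refine sum_le_sum fun v _ => ?_
  rw [← card_neighborFinset_eq_degree]
  refine (card_le_card fun w hw => ?_).trans (hf (f v))
  rw [mem_neighborFinset] at hw
  simpa using hw.2.symm

end fiberGraph

end SimpleGraph

open SimpleGraph

theorem exists_fin_card_fiber_le (n : ℕ) {m : ℕ} (hm : 0 < m) :
    ∃ f : Fin n → Fin m, ∀ i, #{v | f v = i} ≤ n / m + 1 := by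
  refine ⟨fun v => ⟨v % m, Nat.mod_lt _ hm⟩, fun i => ?_⟩
  refine (card_le_card_of_injOn (fun v : Fin n => (v : ℕ) / m) (t := range (n / m + 1)) ?_ ?_
    ).trans (card_range _).le
  · intro v _
    simpa [Nat.lt_succ_iff] using Nat.div_le_div_right v.isLt.le
  · intro v hv w hw hvw
    simp only [coe_filter_univ, Set.mem_ofPred, Fin.ext_iff] at hv hw
    refine Fin.ext ?_
    rw [← Nat.mod_add_div v m, ← Nat.mod_add_div w m, hv, hw]
    exact congrArg (_ + m * ·) hvw

theorem exists_two_mul_card_edgeFinset_fiberGraph_le (n : ℕ) {m : ℕ} (hm : 0 < m) :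
    ∃ f : Fin n → Fin m, 2 * (#(fiberGraph f).edgeFinset : ℝ) ≤ n ^ 2 / m + n := by
  obtain ⟨f, hf⟩ := exists_fin_card_fiber_le n hm
  refine ⟨f, ?_⟩
  have hq : ((n / m : ℕ) : ℝ) ≤ n / m := Nat.cast_div_le
  have := two_mul_card_edgeFinset_fiberGraph_le f hf
  rw [Fintype.card_fin] at this
  calc 2 * (#(fiberGraph f).edgeFinset : ℝ) ≤ n * ((n / m : ℕ) + 1 : ℝ) := by exact_mod_cast this
    _ ≤ n * (n / m + 1) := by gcongr
    _ = n ^ 2 / m + n := by ring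

theorem ncard_edgeSet_sup_diff_graphOfFn {n : ℕ} (ω : Sym2 (Fin n) → Bool)
    (H : SimpleGraph (Fin n)) [DecidableRel H.Adj] :
    ((graphOfFn ω ⊔ H).edgeSet \ (graphOfFn ω).edgeSet).ncard =
      #{e ∈ H.edgeFinset | ω e = false} := by
  rw [edgeSet_sup, Set.union_sdiff_left, ← Set.ncard_coe_finset]
  congr 1
  ext e
  induction e with
  | _ v w =>
    by_cases h : H.Adj v w
    · simp [graphOfFn, h, h.ne]
    · simp [h]

theorem exists_supergraph_covered_by_fibers {n m k : ℕ} (hmk : m < k) (f : Fin n → Fin m)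
    (ω : Sym2 (Fin n) → Bool) {B : ℝ}
    (hB : (#{e ∈ (fiberGraph f).edgeFinset | ω e = false} : ℝ) ≤ B) :
    ∃ G' : SimpleGraph (Fin n), graphOfFn ω ≤ G' ∧
      ((G'.edgeSet \ (graphOfFn ω).edgeSet).ncard : ℝ) ≤ B ∧
      (∃ t : Fin m → Set (Fin n), (∀ i, G'.IsClique (t i)) ∧ (⋃ i, t i) = Set.univ) ∧
      ¬ ∃ S : Set (Fin n), Nonempty (cycleGraph (2 * k) ≃g G'.induce S) := by
  have hclique : ∀ i, (graphOfFn ω ⊔ fiberGraph f).IsClique (f ⁻¹' {i}) := fun i =>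
    (fiberGraph_isClique_preimage f i).mono le_sup_right
  have hcover : ⋃ i, f ⁻¹' {i} = Set.univ :=
    Set.eq_univ_of_forall fun v => Set.mem_iUnion.2 ⟨f v, rfl⟩
  exact ⟨_, le_sup_left, by rwa [ncard_edgeSet_sup_diff_graphOfFn], ⟨_, hclique, hcover⟩,
    not_exists_iso_induce_cycleGraph_of_iUnion_isClique hmk hclique hcover⟩

theorem tendsto_measure_nhds_one_of_compl_subset {ι : Type*} {l : Filter ι} {Ω : ι → Type*}
    [∀ i, MeasurableSpace (Ω i)] {μ : ∀ i, Measure (Ω i)} [∀ i, IsProbabilityMeasure (μ i)]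
    {A B : ∀ i, Set (Ω i)} (hAB : ∀ᶠ i in l, (A i)ᶜ ⊆ B i)
    (hB : Tendsto (fun i => μ i (B i)) l (𝓝 0)) : Tendsto (fun i => μ i (A i)) l (𝓝 1) := by
  have hlow : Tendsto (fun i => 1 - μ i (B i)) l (𝓝 1) := by
    simpa using ENNReal.Tendsto.sub tendsto_const_nhds hB (.inl ENNReal.one_ne_top)
  refine tendsto_of_tendsto_of_tendsto_of_le_of_le' hlow tendsto_const_nhds ?_
    (.of_forall fun _ => prob_le_one)
  filter_upwards [hAB] with i hi
  calc 1 - μ i (B i) ≤ 1 - μ i (A i)ᶜ := tsub_le_tsub_left (measure_mono hi) _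
    _ ≤ μ i (A i) := tsub_le_iff_right.2 (measure_univ (μ := μ i) ▸ measure_univ_le_add_compl _)

section bernoulli

open ProbabilityTheory (variance variance_eq_sub iIndepFun iIndepFun_pi IndepFun.variance_sum
  meas_ge_le_variance_div_sq)

variable {p : ℝ}

theorem isProbabilityMeasure_bernoulliMeasure (hp₀ : 0 ≤ p) (hp₁ : p ≤ 1) :
    IsProbabilityMeasure (bernoulliMeasure p) := by
  constructor
  simp [bernoulliMeasure, ← ENNReal.ofReal_add hp₀ (sub_nonneg.2 hp₁)]

theorem integral_bernoulliMeasure (hp₀ : 0 ≤ p) (hp₁ : p ≤ 1) (g : Bool → ℝ) :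
    ∫ b, g b ∂bernoulliMeasure p = p * g true + (1 - p) * g false := by
  rw [integral_fintype .of_finite, Fintype.sum_bool]
  simp [measureReal_def, bernoulliMeasure, hp₀, hp₁]

theorem variance_bernoulliMeasure_indicator_false (hp₀ : 0 ≤ p) (hp₁ : p ≤ 1) :
    variance (fun b : Bool => if b = false then (1 : ℝ) else 0) (bernoulliMeasure p) =
      p * (1 - p) := by
  have := isProbabilityMeasure_bernoulliMeasure hp₀ hp₁
  rw [variance_eq_sub .of_discrete]
  simp [integral_bernoulliMeasure hp₀ hp₁]
  ring

theorem measure_le_abs_card_filter_false_sub_le {α : Type*} [Fintype α] (hp₀ : 0 ≤ p)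
    (hp₁ : p ≤ 1) (E : Finset α) {c : ℝ} (hc : 0 < c) :
    Measure.pi (fun _ : α => bernoulliMeasure p)
        {ω | c ≤ |(#{e ∈ E | ω e = false} : ℝ) - (1 - p) * #E|} ≤
      ENNReal.ofReal (p * (1 - p) * #E / c ^ 2) := by
  have := isProbabilityMeasure_bernoulliMeasure hp₀ hp₁
  set μ := Measure.pi fun _ : α => bernoulliMeasure p
  set g : Bool → ℝ := fun b => if b = false then 1 else 0
  set X : α → (α → Bool) → ℝ := fun e ω => g (ω e)
  have hX : ∀ e, MemLp (X e) 2 μ := fun e => .of_discrete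
  have hmean : ∀ e, ∫ ω, X e ω ∂μ = 1 - p := fun e => by
    change ∫ ω, g (ω e) ∂μ = 1 - p
    rw [← integral_map (measurable_pi_apply e).aemeasurable .of_discrete,
      (measurePreserving_eval _ e).map_eq, integral_bernoulliMeasure hp₀ hp₁]
    simp [g]
  have hvar : ∀ e, variance (X e) μ = p * (1 - p) := fun e => by
    rw [(measurePreserving_eval _ e).variance_fun_comp .of_discrete,
      variance_bernoulliMeasure_indicator_false hp₀ hp₁]
  have hindep : iIndepFun X μ :=
    iIndepFun_pi fun _ => Measurable.of_discrete.aemeasurable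
  have hcount : ∀ ω : α → Bool, (#{e ∈ E | ω e = false} : ℝ) = (∑ e ∈ E, X e) ω := fun ω => by
    rw [natCast_card_filter, Finset.sum_apply]
  have hsum_mean : ∫ ω, (∑ e ∈ E, X e) ω ∂μ = (1 - p) * #E := by
    simp_rw [Finset.sum_apply]
    rw [integral_finsetSum E fun e _ => (hX e).integrable one_le_two]
    simp [hmean]
    ring
  have hsum_var : variance (∑ e ∈ E, X e) μ = p * (1 - p) * #E := by
    rw [IndepFun.variance_sum (fun e _ => hX e)
      fun e _ f _ hef => hindep.indepFun hef]
    simp [hvar, mul_comm]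
  simp_rw [hcount, ← hsum_mean, ← hsum_var]
  exact meas_ge_le_variance_div_sq (memLp_finsetSum' E fun e _ => hX e) hc

end bernoulli

theorem card_finset_sym2_fin_le_sq {n : ℕ} (E : Finset (Sym2 (Fin n))) : #E ≤ n ^ 2 :=
  calc #E ≤ Fintype.card (Sym2 (Fin n)) := card_le_univ E
    _ ≤ Fintype.card (Fin n × Fin n) := Fintype.card_le_of_surjective _ Sym2.mk_surjective
    _ = n ^ 2 := by simp [sq]

theorem isProbabilityMeasure_gnp {n : ℕ} {p : ℝ} (hp₀ : 0 ≤ p) (hp₁ : p ≤ 1) :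
    IsProbabilityMeasure (gnp n p) :=
  have := isProbabilityMeasure_bernoulliMeasure hp₀ hp₁
  Measure.pi.instIsProbabilityMeasure _

theorem tendsto_gnp_abs_card_filter_false_sub_ge {p : ℝ} (hp₀ : 0 ≤ p) (hp₁ : p ≤ 1)
    (E : ∀ n, Finset (Sym2 (Fin n))) {δ : ℝ} (hδ : 0 < δ) :
    Tendsto (fun n => gnp n p
        {ω | δ * n ^ 2 ≤ |(#{e ∈ E n | ω e = false} : ℝ) - (1 - p) * #(E n)|}) atTop (𝓝 0) := by
  have hlim : Tendsto (fun n : ℕ => ENNReal.ofReal ((δ ^ 2)⁻¹ / n)) atTop (𝓝 0) :=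
    ENNReal.ofReal_zero ▸ ENNReal.tendsto_ofReal (tendsto_const_div_atTop_nhds_zero_nat _)
  refine tendsto_of_tendsto_of_tendsto_of_le_of_le' tendsto_const_nhds hlim
    (.of_forall fun _ => zero_le) ?_
  filter_upwards [eventually_ge_atTop 1] with n hn
  have hn' : (1 : ℝ) ≤ n := by exact_mod_cast hn
  have hE : (#(E n) : ℝ) ≤ n ^ 2 := by exact_mod_cast card_finset_sym2_fin_le_sq (E n)
  refine (measure_le_abs_card_filter_false_sub_le hp₀ hp₁ (E n) (by positivity)).trans
    (ENNReal.ofReal_le_ofReal ?_)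
  calc p * (1 - p) * #(E n) / (δ * n ^ 2) ^ 2 ≤ 1 * n ^ 2 / (δ * n ^ 2) ^ 2 := by
        gcongr
        nlinarith
    _ = (δ ^ 2)⁻¹ / n ^ 2 := by field_simp
    _ ≤ (δ ^ 2)⁻¹ / n := by gcongr; nlinarith

/-- Let `k ≥ 2` be a fixed integer.  With high probability one can add at most
`(1/4 + o(1)) n² / (k-1)` edges to `G(n,1/2)` so that the vertex set of the resulting
graph is covered by `k-1` cliques; in particular, the resulting graph contains no induced
copy of the cycle `C_{2k}`. -/
theorem add_few_edges_to_cover_by_cliques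
    (k : ℕ) (hk : 2 ≤ k) (ε : ℝ) (hε : 0 < ε) :
    Tendsto
      (fun n : ℕ => gnp n (1/2)
        {ω | ∃ G' : SimpleGraph (Fin n), graphOfFn ω ≤ G' ∧
          ((G'.edgeSet \ (graphOfFn ω).edgeSet).ncard : ℝ) ≤
            (1/4 + ε) * (n : ℝ) ^ 2 / ((k : ℝ) - 1) ∧
          (∃ t : Fin (k - 1) → Set (Fin n),
            (∀ i, G'.IsClique (t i)) ∧ (⋃ i, t i) = Set.univ) ∧
          ¬ ∃ S : Set (Fin n), Nonempty (SimpleGraph.cycleGraph (2 * k) ≃g G'.induce S)})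
      atTop (nhds 1) := by
  have hcast : ((k - 1 : ℕ) : ℝ) = k - 1 := by rw [Nat.cast_sub (by omega), Nat.cast_one]
  have hm : (0 : ℝ) < k - 1 := by rw [← hcast]; exact_mod_cast (by omega : 0 < k - 1)
  choose f hf using fun n => exists_two_mul_card_edgeFinset_fiberGraph_le n (m := k - 1) (by omega)
  have := fun n => isProbabilityMeasure_gnp (n := n) (p := 1 / 2) (by norm_num) (by norm_num)
  refine tendsto_measure_nhds_one_of_compl_subset ?_ <| tendsto_gnp_abs_card_filter_false_sub_ge
    (by norm_num) (by norm_num) (fun n => (fiberGraph (f n)).edgeFinset) (δ := ε / (2 * (k - 1)))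
    (by positivity)
  filter_upwards [(tendsto_natCast_atTop_atTop (R := ℝ)).eventually_ge_atTop ((k - 1) / (2 * ε))]
    with n hn ω hω
  by_contra hdev
  refine hω <| exists_supergraph_covered_by_fibers (by omega) (f n) ω ?_
  rw [Set.mem_ofPred, not_le, abs_lt] at hdev
  have hedges := hf n
  rw [hcast] at hedges
  -- rounding the block sizes up costs `n / 4`, absorbed by half of the `ε`-slack once `n` is large
  have hslack : (n : ℝ) / 4 ≤ ε / (2 * (k - 1)) * n ^ 2 := by
    rw [div_le_iff₀ (by positivity), mul_comm] at hn
    rw [div_mul_eq_mul_div, le_div_iff₀ (by positivity)]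
    nlinarith
  have hsplit : (1 / 4 + ε) * (n : ℝ) ^ 2 / (k - 1) =
      n ^ 2 / (k - 1) / 4 + 2 * (ε / (2 * (k - 1)) * n ^ 2) := by
    field_simp
  linarith [hdev.2]
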